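/- Let $d=1$, $\gamma \in L^1(\mathbb{R})$ nonnegative, and $0 \le s < t$. Then for all $x, y \in \mathbb{R}$: $\mathbf{K}_{s,t}(x,y) := \int_s^t \int_{\mathbb{R}^2} G_{t-r}(x-z)G_{r-s}(z-y)\,G_{t-r}(x-z')G_{r-s}(z'-y)\,\gamma(z-z')\,dz\,dz'\,dr \le \frac{t^2 \|\gamma\|_{L^1(\mathbb{R})}}{8}\, G_{t-s}(x-y)$. -/

import Mathlib

open MeasureTheory Real intervalIntegral

noncomputable def G1 (t x : ℝ) : ℝ := if |x| < t then 1/2 else 0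

/-!
For `t - r, r - s ≥ 0` the triangle inequality gives
`G_{t-r}(x - z') G_{r-s}(z' - y) ≤ G_{t-s}(x - y) / 2`, so the `z'`-integral against `γ(z - z')`
is at most `G_{t-s}(x - y) ‖γ‖₁ / 2`. What remains, `∫ G_{t-r}(x - z) G_{r-s}(z - y) dz`, is at most
`min (t - r) (r - s) / 2 ≤ (t - s) / 4`, since each kernel has mass equal to its radius and is
bounded by `1 / 2`. Integrating over `r ∈ [s, t]` gives `(t - s)² ‖γ‖₁ G_{t-s}(x - y) / 8`.
-/

lemma G1_nonneg (t x : ℝ) : 0 ≤ G1 t x := by unfold G1; split <;> norm_num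

lemma G1_le_half (t x : ℝ) : G1 t x ≤ 1 / 2 := by unfold G1; split <;> norm_num

lemma G1_eq_indicator (t : ℝ) : G1 t = (Metric.ball 0 t).indicator fun _ => 1 / 2 := by
  ext x
  simp [G1, Set.indicator]

lemma integrable_G1 (t : ℝ) : Integrable (G1 t) := by
  rw [G1_eq_indicator]
  exact (integrableOn_const measure_ball_lt_top.ne).integrable_indicator measurableSet_ball

lemma measurable_G1 (t : ℝ) : Measurable (G1 t) := by
  rw [G1_eq_indicator]
  exact measurable_const.indicator measurableSet_ball

lemma integral_G1 {t : ℝ} (ht : 0 ≤ t) : ∫ x, G1 t x = t := by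
  rw [G1_eq_indicator, MeasureTheory.integral_indicator measurableSet_ball, setIntegral_const,
    smul_eq_mul, measureReal_def, Real.volume_ball, ENNReal.toReal_ofReal (by linarith)]
  ring

lemma G1_mul_G1_le (a b x y z : ℝ) : G1 a (x - z) * G1 b (z - y) ≤ G1 (a + b) (x - y) / 2 := by
  unfold G1
  split_ifs with hxz hzy hxy <;> norm_num
  exact hxy (by linarith [abs_sub_le x z y])

lemma integrable_G1_mul_G1 (a b x y : ℝ) : Integrable fun z => G1 a (x - z) * G1 b (z - y) := by
  refine ((integrable_G1 a).comp_sub_left x).mul_bdd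
    ((measurable_G1 b).comp (measurable_id.sub_const y)).aestronglyMeasurable (c := 1 / 2) ?_
  refine .of_forall fun z => ?_
  rw [Real.norm_of_nonneg (G1_nonneg _ _)]
  exact G1_le_half _ _

lemma integral_G1_mul_G1_le {a b : ℝ} (ha : 0 ≤ a) (hb : 0 ≤ b) (x y : ℝ) :
    ∫ z, G1 a (x - z) * G1 b (z - y) ≤ min a b / 2 := by
  have hnonneg : 0 ≤ᵐ[volume] fun z => G1 a (x - z) * G1 b (z - y) :=
    .of_forall fun z => mul_nonneg (G1_nonneg _ _) (G1_nonneg _ _)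
  rw [← min_div_div_right zero_le_two]
  refine le_min ?_ ?_
  · calc ∫ z, G1 a (x - z) * G1 b (z - y)
        ≤ ∫ z, G1 a (x - z) * (1 / 2) :=
          integral_mono_of_nonneg hnonneg (((integrable_G1 a).comp_sub_left x).mul_const _)
            (.of_forall fun z => mul_le_mul_of_nonneg_left (G1_le_half _ _) (G1_nonneg _ _))
      _ = a / 2 := by
          rw [MeasureTheory.integral_mul_const, integral_sub_left_eq_self, integral_G1 ha]; ring
  · calc ∫ z, G1 a (x - z) * G1 b (z - y)
        ≤ ∫ z, 1 / 2 * G1 b (z - y) :=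
          integral_mono_of_nonneg hnonneg (((integrable_G1 b).comp_sub_right y).const_mul _)
            (.of_forall fun z => mul_le_mul_of_nonneg_right (G1_le_half _ _) (G1_nonneg _ _))
      _ = b / 2 := by
          rw [MeasureTheory.integral_const_mul, integral_sub_right_eq_self, integral_G1 hb]; ring

lemma integral_mul_comp_sub_le {G : Type*} [MeasurableSpace G] [AddGroup G] [MeasurableAdd G]
    [MeasurableNeg G] {μ : Measure G} [μ.IsNegInvariant] [μ.IsAddLeftInvariant]
    {f γ : G → ℝ} {C : ℝ} (hf₀ : ∀ x, 0 ≤ f x) (hfC : ∀ x, f x ≤ C)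
    (hγ : Integrable γ μ) (hγ₀ : ∀ x, 0 ≤ γ x) (z : G) :
    ∫ x, f x * γ (z - x) ∂μ ≤ C * ∫ x, γ x ∂μ := by
  rw [← integral_sub_left_eq_self γ μ z, ← MeasureTheory.integral_const_mul]
  exact integral_mono_of_nonneg (.of_forall fun x => mul_nonneg (hf₀ x) (hγ₀ _))
    ((hγ.comp_sub_left z).const_mul C)
    (.of_forall fun x => mul_le_mul_of_nonneg_right (hfC x) (hγ₀ _))

lemma norm_integral_integral_G1_mul_G1_mul_le {γ : ℝ → ℝ} (hγ : Integrable γ)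
    (hγ₀ : ∀ x, 0 ≤ γ x) {a b : ℝ} (ha : 0 ≤ a) (hb : 0 ≤ b) (x y : ℝ) :
    ‖∫ z, ∫ z', G1 a (x - z) * G1 b (z - y) * (G1 a (x - z') * G1 b (z' - y)) * γ (z - z')‖
      ≤ G1 (a + b) (x - y) / 2 * (∫ w, γ w) * (min a b / 2) := by
  set P : ℝ → ℝ := fun z => G1 a (x - z) * G1 b (z - y)
  have hP₀ : ∀ z, 0 ≤ P z := fun z => mul_nonneg (G1_nonneg _ _) (G1_nonneg _ _)
  have hPγ₀ : ∀ z, 0 ≤ ∫ z', P z' * γ (z - z') :=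
    fun z => integral_nonneg fun z' => mul_nonneg (hP₀ z') (hγ₀ _)
  have hK₀ : 0 ≤ G1 (a + b) (x - y) / 2 * ∫ w, γ w :=
    mul_nonneg (div_nonneg (G1_nonneg _ _) zero_le_two) (integral_nonneg hγ₀)
  have hfactor : ∫ z, ∫ z', P z * P z' * γ (z - z') = ∫ z, P z * ∫ z', P z' * γ (z - z') := by
    simp_rw [mul_assoc, MeasureTheory.integral_const_mul]
  rw [hfactor, Real.norm_of_nonneg (integral_nonneg fun z => mul_nonneg (hP₀ z) (hPγ₀ z))]
  calc ∫ z, P z * ∫ z', P z' * γ (z - z')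
      ≤ ∫ z, (G1 (a + b) (x - y) / 2 * ∫ w, γ w) * P z := by
        refine integral_mono_of_nonneg (.of_forall fun z => mul_nonneg (hP₀ z) (hPγ₀ z))
          ((integrable_G1_mul_G1 a b x y).const_mul _) (.of_forall fun z => ?_)
        exact (mul_le_mul_of_nonneg_left
          (integral_mul_comp_sub_le hP₀ (fun z' => G1_mul_G1_le a b x y z') hγ hγ₀ z)
          (hP₀ z)).trans_eq (mul_comm _ _)
    _ ≤ _ := by
      rw [MeasureTheory.integral_const_mul]
      exact mul_le_mul_of_nonneg_left (integral_G1_mul_G1_le ha hb x y) hK₀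

theorem K_bound_1D (γ : ℝ → ℝ) (hγint : Integrable γ) (hγpos : ∀ x, 0 ≤ γ x)
    (s t x y : ℝ) (hs : 0 ≤ s) (hst : s < t) :
    (∫ r in s..t, ∫ z : ℝ, ∫ z' : ℝ,
        G1 (t - r) (x - z) * G1 (r - s) (z - y) *
        (G1 (t - r) (x - z') * G1 (r - s) (z' - y)) * γ (z - z'))
      ≤ t ^ 2 * (∫ w, γ w) / 8 * G1 (t - s) (x - y) := by
  set F : ℝ → ℝ := fun r => ∫ z : ℝ, ∫ z' : ℝ,
    G1 (t - r) (x - z) * G1 (r - s) (z - y) *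
    (G1 (t - r) (x - z') * G1 (r - s) (z' - y)) * γ (z - z')
  have hslice : ∀ r ∈ Set.uIoc s t,
      ‖F r‖ ≤ G1 (t - s) (x - y) / 2 * (∫ w, γ w) * ((t - s) / 4) := by
    intro r hr
    rw [Set.uIoc_of_le hst.le] at hr
    have hmin : min (t - r) (r - s) ≤ (t - s) / 2 := by
      linarith [min_le_left (t - r) (r - s), min_le_right (t - r) (r - s)]
    have hK₀ : 0 ≤ G1 (t - s) (x - y) / 2 * ∫ w, γ w :=
      mul_nonneg (div_nonneg (G1_nonneg _ _) zero_le_two) (integral_nonneg hγpos)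
    have hr_bound := norm_integral_integral_G1_mul_G1_mul_le hγint hγpos (a := t - r)
      (b := r - s) (by linarith [hr.2]) (by linarith [hr.1]) x y
    rw [sub_add_sub_cancel] at hr_bound
    exact hr_bound.trans (mul_le_mul_of_nonneg_left (by linarith) hK₀)
  -- a pointwise bound on `‖F‖` needs no integrability of `F` in `r`
  calc ∫ r in s..t, F r
      ≤ ‖∫ r in s..t, F r‖ := le_norm_self _
    _ ≤ G1 (t - s) (x - y) / 2 * (∫ w, γ w) * ((t - s) / 4) * |t - s| :=
        norm_integral_le_of_norm_le_const hslice
    _ = (t - s) ^ 2 * (∫ w, γ w) / 8 * G1 (t - s) (x - y) := by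
        rw [abs_of_pos (sub_pos.2 hst)]; ring
    _ ≤ t ^ 2 * (∫ w, γ w) / 8 * G1 (t - s) (x - y) := by
        gcongr
        · exact G1_nonneg _ _
        · exact integral_nonneg hγpos
        · linarith
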